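/- Let φv, φk, φw, θv, θk, θw, S, B be positive real numbers such that θv/φv ≤ θk/φk, θk ≤ φk * B / S, and θv/φv ≤ θw/φw. Then min (B * φv / S) (θw * φv / φw) ≥ θv. -/
import Mathlib


theorem simt_selected_payment_ge_valuation (φv φk φw θv θk θw S B : ℝ)
    (hφv : 0 < φv) (hφk : 0 < φk) (hφw : 0 < φw)
    (hθv : 0 < θv) (hθk : 0 < θk) (hθw : 0 < θw)
    (hS : 0 < S) (hB : 0 < B)
    (h1 : θv / φv ≤ θk / φk) (h2 : θk ≤ φk * B / S) (h3 : θv / φv ≤ θw / φw) :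
    min (B * φv / S) (θw * φv / φw) ≥ θv := by
  rw [ge_iff_le, le_min_iff]
  rw [div_le_div_iff₀ hφv hφk] at h1
  rw [div_le_div_iff₀ hφv hφw] at h3
  rw [le_div_iff₀ hS] at h2
  constructor
  · rw [le_div_iff₀ hS]; nlinarith
  · rw [le_div_iff₀ hφw]; nlinarith
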